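/- arXiv:2308.10138 — 2 statements merged into one kernel-verified Lean document; each statement's English description precedes it below -/
import Mathlib

section
/- Let Z_k = (E_1 + ⋯ + E_k)^{-1/α} where E_1, E_2, … are i.i.d. standard exponential random variables and α ∈ (0,2). Then the series ∑_{k=1}^∞ Z_k² converges almost surely to a finite, strictly positive random variable. -/
/-! By the strong law of large numbers, `S_k = E_1 + ⋯ + E_k` grows like `k · 𝔼[E_1]` with
`𝔼[E_1] > 0`, so `Z_k² = S_k^(-2/α)` is eventually bounded by a multiple of `k^(-2/α)`, which is
summable because `2/α > 1`. The sum is positive since its first term is. -/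

open Filter MeasureTheory ProbabilityTheory

open scoped Topology

lemma gammaMeasure_Iic_zero (a r : ℝ) : gammaMeasure a r (Set.Iic 0) = 0 := by
  rw [gammaMeasure, withDensity_apply _ measurableSet_Iic,
    setLIntegral_congr Iio_ae_eq_Iic.symm]
  exact lintegral_gammaPDF_of_nonpos le_rfl

lemma ae_pos_gammaMeasure (a r : ℝ) : ∀ᵐ x ∂gammaMeasure a r, 0 < x := by
  simpa [ae_iff, not_lt, Set.Iic_def] using gammaMeasure_Iic_zero a r

lemma integrable_id_gammaMeasure {a r : ℝ} (ha : 0 < a) (hr : 0 < r) :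
    Integrable id (gammaMeasure a r) := by
  have hm : Measurable (gammaPDF a r) := (measurable_gammaPDFReal a r).ennreal_ofReal
  rw [gammaMeasure, integrable_withDensity_iff hm (.of_forall fun _ => ENNReal.ofReal_lt_top)]
  have heq : (fun x : ℝ => id x * (gammaPDF a r x).toReal) = Set.indicator (Set.Ioi 0)
      (fun x => r ^ a / Real.Gamma a * (x ^ a * Real.exp (-r * x ^ (1 : ℝ)))) := by
    funext x
    rw [id, gammaPDF, ENNReal.toReal_ofReal (gammaPDFReal_nonneg ha hr x)]
    simp only [gammaPDFReal, Set.indicator_apply, Set.mem_Ioi]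
    split_ifs with h0 h1 h1
    · rw [Real.rpow_one, Real.rpow_sub h1, Real.rpow_one]
      field_simp
    · obtain rfl : x = 0 := by linarith
      simp
    · linarith
    · simp
  rw [heq, integrable_indicator_iff measurableSet_Ioi]
  exact (integrableOn_rpow_mul_exp_neg_mul_rpow (by linarith) one_pos hr).const_mul _

lemma summable_rpow_of_tendsto_div_natCast {S : ℕ → ℝ} {L p : ℝ}
    (hS : Tendsto (fun n => S n / n) atTop (𝓝 L)) (hL : 0 < L) (hp : p < -1) :
    Summable fun n => S n ^ p := by
  refine (Real.summable_nat_rpow.2 hp |>.mul_left ((L / 2) ^ p)).of_norm_bounded_eventually_nat ?_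
  filter_upwards [hS.eventually (eventually_ge_nhds (half_lt_self hL)), eventually_gt_atTop 0]
    with n hn hn0
  have hn0' : (0 : ℝ) < n := Nat.cast_pos.2 hn0
  have hlow : L / 2 * n ≤ S n := (le_div_iff₀ hn0').1 hn
  have hlow0 : 0 < L / 2 * n := by positivity
  calc ‖S n ^ p‖ = S n ^ p := Real.norm_of_nonneg (Real.rpow_nonneg (hlow0.le.trans hlow) _)
    _ ≤ (L / 2 * n) ^ p := Real.rpow_le_rpow_of_nonpos hlow0 hlow (by linarith)
    _ = (L / 2) ^ p * (n : ℝ) ^ p := Real.mul_rpow (by positivity) hn0'.le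

lemma integral_pos_of_ae_pos {Ω : Type*} [MeasurableSpace Ω] {μ : Measure Ω} [NeZero μ]
    {X : Ω → ℝ} (hX : Integrable X μ) (hpos : ∀ᵐ ω ∂μ, 0 < X ω) : 0 < ∫ ω, X ω ∂μ := by
  rw [integral_pos_iff_support_of_nonneg_ae (hpos.mono fun _ h => h.le) hX]
  refine pos_iff_ne_zero.2 fun h => NeZero.ne μ (ae_eq_bot.1 (eventually_false_iff_eq_bot.1 ?_))
  filter_upwards [measure_eq_zero_iff_ae_notMem.1 h, hpos] with ω h1 h2 using h1 h2.ne'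

/-- With `Z_k = (E_1 + ⋯ + E_{k+1})^{-1/α}` for i.i.d. standard exponentials `E_j` and
`α ∈ (0,2)`, the series `∑_k Z_k²` converges almost surely to a finite strictly positive limit. -/
theorem sum_sq_Zk_summable_pos
    {Ω : Type*} [MeasureSpace Ω] [IsProbabilityMeasure (ℙ : Measure Ω)]
    (E : ℕ → Ω → ℝ) (hmeas : ∀ k, Measurable (E k))
    (hindep : iIndepFun E ℙ)
    (hdist : ∀ k, Measure.map (E k) ℙ = expMeasure 1)
    (α : ℝ) (hα0 : 0 < α) (hα2 : α < 2)
    (Z : ℕ → Ω → ℝ)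
    (hZ : ∀ k ω, Z k ω = (∑ j ∈ Finset.range (k + 1), E j ω) ^ (-1 / α)) :
    ∀ᵐ ω ∂(ℙ : Measure Ω),
      Summable (fun k => (Z k ω) ^ 2) ∧ 0 < ∑' k, (Z k ω) ^ 2 := by
  have hpos : ∀ j, ∀ᵐ ω ∂(ℙ : Measure Ω), 0 < E j ω := fun j =>
    ae_of_ae_map (hmeas j).aemeasurable ((hdist j).symm ▸ ae_pos_gammaMeasure 1 1)
  have hint : Integrable (E 0) ℙ := by
    have h : Integrable id (Measure.map (E 0) ℙ) :=
      (hdist 0).symm ▸ integrable_id_gammaMeasure one_pos one_pos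
    exact (integrable_map_measure h.aestronglyMeasurable (hmeas 0).aemeasurable).1 h
  have hident : ∀ i, IdentDistrib (E i) (E 0) ℙ ℙ := fun i =>
    ⟨(hmeas i).aemeasurable, (hmeas 0).aemeasurable, by rw [hdist i, hdist 0]⟩
  have hlln := strong_law_ae_real E hint (fun i j hij => hindep.indepFun hij) hident
  have hp : -1 / α * 2 < -1 := by
    rw [div_mul_eq_mul_div, neg_one_mul, neg_div, neg_lt_neg_iff, one_lt_div hα0]
    exact hα2
  filter_upwards [ae_all_iff.2 hpos, hlln] with ω hposω hlimω
  have hsq : ∀ k, Z k ω ^ 2 = (∑ j ∈ Finset.range (k + 1), E j ω) ^ (-1 / α * 2) := fun k => by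
    rw [hZ, Real.rpow_mul (Finset.sum_nonneg fun j _ => (hposω j).le), Real.rpow_two]
  have hsum : Summable fun k => Z k ω ^ 2 := by
    simp_rw [hsq]
    exact (summable_nat_add_iff 1).2
      (summable_rpow_of_tendsto_div_natCast hlimω (integral_pos_of_ae_pos hint (hpos 0)) hp)
  refine ⟨hsum, hsum.tsum_pos (fun k => sq_nonneg _) 0 ?_⟩
  rw [hsq]
  exact Real.rpow_pos_of_pos (Finset.sum_pos (fun j _ => hposω j) Finset.nonempty_range_add_one) _
end

section
/- Uniform integrability implies a uniform weak LLN for triangular arrays: Let (X_{n,g})_{g=1}^n be row-wise i.i.d. real random variables with E[X_{n,1}] = μ_n, and suppose lim_{λ→∞} sup_n E[|X_{n,1}| · 1{|X_{n,1}| > λ}] = 0. Then n^{-1} ∑_{g=1}^n X_{n,g} − μ_n → 0 in probability as n → ∞. -/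
/-!
Truncate the `n`-th row at a level `A` just above the uniform-integrability threshold `λ`.
The truncated variables are independent and bounded by `A`, so in `L¹` their average deviates
from its mean by at most `√Var ≤ A / √n`. Truncating costs at most the tail integral
`E[|X|; |X| > λ]` in each summand and in the mean, and this is small uniformly in `n`.
Hence `E |n⁻¹ ∑ X_{n,g} - μ_n|` is eventually small, and Markov's inequality concludes.
-/

open Filter MeasureTheory ProbabilityTheory Topology Finset

lemma abs_inv_mul_sum_sub_le {n : ℕ} (hn : n ≠ 0) (x y : ℕ → ℝ) (a b : ℝ) :
    |(n : ℝ)⁻¹ * ∑ i ∈ range n, x i - a| ≤ (n : ℝ)⁻¹ * ∑ i ∈ range n, |x i - y i|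
      + (n : ℝ)⁻¹ * |∑ i ∈ range n, y i - n * b| + |b - a| := by
  have hn' : (n : ℝ) ≠ 0 := Nat.cast_ne_zero.2 hn
  have hsplit : (n : ℝ)⁻¹ * ∑ i ∈ range n, x i - a = (n : ℝ)⁻¹ * ∑ i ∈ range n, (x i - y i)
      + (n : ℝ)⁻¹ * (∑ i ∈ range n, y i - n * b) + (b - a) := by
    rw [sum_sub_distrib]; field_simp; ring
  have hinv : |(n : ℝ)⁻¹| = (n : ℝ)⁻¹ := abs_of_nonneg (by positivity)
  calc _ ≤ |(n : ℝ)⁻¹ * ∑ i ∈ range n, (x i - y i)|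
        + |(n : ℝ)⁻¹ * (∑ i ∈ range n, y i - n * b)| + |b - a| := hsplit ▸ abs_add_three _ _ _
    _ ≤ _ := by
      rw [abs_mul, abs_mul, hinv]
      gcongr
      exact abs_sum_le_sum_abs _ _

namespace ProbabilityTheory

variable {Ω : Type*} {m : MeasurableSpace Ω} {μ : Measure Ω}

lemma integral_abs_sub_truncation_le_setIntegral [IsFiniteMeasure μ] {f : Ω → ℝ}
    (hf : Integrable f μ) {lam A : ℝ} (hA : lam < A) :
    ∫ ω, |f ω - truncation f A ω| ∂μ ≤ ∫ ω in {ω | lam < |f ω|}, |f ω| ∂μ := by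
  rw [← setIntegral_eq_integral_of_forall_compl_eq_zero fun ω hω ↦ by
    rw [truncation_eq_self ((not_lt.1 hω).trans_lt hA), sub_self, abs_zero]]
  refine setIntegral_mono (hf.sub hf.aestronglyMeasurable.integrable_truncation).abs.integrableOn
    hf.abs.integrableOn fun ω ↦ ?_
  simp only [truncation, Function.comp_apply, Set.indicator_apply]
  split_ifs <;> simp

lemma integral_abs_sub_integral_le_sqrt_variance [IsProbabilityMeasure μ] {Z : Ω → ℝ}
    (hZ : MemLp Z 2 μ) : ∫ ω, |Z ω - μ[Z]| ∂μ ≤ √(Var[Z; μ]) := by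
  have hW : MemLp (fun ω ↦ |Z ω - μ[Z]|) 2 μ := (hZ.sub (memLp_const _)).abs
  have hsq : μ[(fun ω ↦ |Z ω - μ[Z]|) ^ 2] = Var[Z; μ] := by
    simp only [Pi.pow_apply, sq_abs]
    exact (variance_eq_integral hZ.aemeasurable).symm
  refine Real.le_sqrt_of_sq_le ?_
  -- Cauchy–Schwarz in the form `0 ≤ Var |Z - E Z|`.
  have := variance_eq_sub hW
  linarith [variance_nonneg (fun ω ↦ |Z ω - μ[Z]|) μ]

lemma variance_sum_le_of_iIndepFun_of_abs_le [IsProbabilityMeasure μ] {ι : Type*}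
    {Y : ι → Ω → ℝ} (hindep : iIndepFun Y μ) (hY : ∀ i, AEStronglyMeasurable (Y i) μ)
    {C : ℝ} (hC : ∀ i ω, |Y i ω| ≤ C) (s : Finset ι) :
    Var[∑ i ∈ s, Y i; μ] ≤ #s * C ^ 2 := by
  have hL2 : ∀ i, MemLp (Y i) 2 μ := fun i ↦ MemLp.of_bound (hY i) C (ae_of_all _ (hC i))
  rw [IndepFun.variance_sum (fun i _ ↦ hL2 i) fun i _ j _ hij ↦ hindep.indepFun hij]
  refine (sum_le_card_nsmul _ _ _ fun i _ ↦ ?_).trans_eq (nsmul_eq_mul _ _)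
  calc Var[Y i; μ] ≤ ((C - -C) / 2) ^ 2 :=
        variance_le_sq_of_bounded (ae_of_all _ fun ω ↦ abs_le.1 (hC i ω)) (hY i).aemeasurable
    _ = C ^ 2 := by ring

lemma integral_abs_sum_sub_sum_integral_le [IsProbabilityMeasure μ] {ι : Type*}
    {Y : ι → Ω → ℝ} (hindep : iIndepFun Y μ) (hY : ∀ i, AEStronglyMeasurable (Y i) μ)
    {C : ℝ} (hC : ∀ i ω, |Y i ω| ≤ C) (s : Finset ι) :
    ∫ ω, |∑ i ∈ s, Y i ω - ∑ i ∈ s, μ[Y i]| ∂μ ≤ C * √(#s : ℝ) := by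
  rcases s.eq_empty_or_nonempty with rfl | ⟨i, -⟩
  · simp
  obtain ⟨ω⟩ := nonempty_of_isProbabilityMeasure μ
  have hL2 : ∀ i, MemLp (Y i) 2 μ := fun i ↦ MemLp.of_bound (hY i) C (ae_of_all _ (hC i))
  have hsum : ∫ ω, ∑ i ∈ s, Y i ω ∂μ = ∑ i ∈ s, μ[Y i] :=
    integral_finsetSum s fun i _ ↦ (hL2 i).integrable one_le_two
  calc ∫ ω, |∑ i ∈ s, Y i ω - ∑ i ∈ s, μ[Y i]| ∂μ ≤ √(Var[∑ i ∈ s, Y i; μ]) := by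
        simpa only [hsum, Finset.sum_apply] using
          integral_abs_sub_integral_le_sqrt_variance (memLp_finsetSum' s fun i _ ↦ hL2 i)
    _ ≤ √(#s * C ^ 2) := Real.sqrt_le_sqrt (variance_sum_le_of_iIndepFun_of_abs_le hindep hY hC s)
    _ = C * √(#s : ℝ) := by
        rw [Real.sqrt_mul' _ (sq_nonneg C), Real.sqrt_sq ((abs_nonneg _).trans (hC i ω)), mul_comm]

lemma integral_abs_inv_mul_sum_sub_le [IsProbabilityMeasure μ] {X : ℕ → Ω → ℝ}
    (hindep : iIndepFun X μ) (hident : ∀ i, IdentDistrib (X i) (X 0) μ μ)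
    (hint : Integrable (X 0) μ) {n : ℕ} (hn : n ≠ 0) (A : ℝ) :
    ∫ ω, |(n : ℝ)⁻¹ * ∑ i ∈ range n, X i ω - μ[X 0]| ∂μ
      ≤ 2 * ∫ ω, |X 0 ω - truncation (X 0) A ω| ∂μ + |A| / √n := by
  set Y : ℕ → Ω → ℝ := fun i ↦ truncation (X i) A
  set I := ∫ ω, |X 0 ω - Y 0 ω| ∂μ
  have hX : ∀ i, Integrable (X i) μ := fun i ↦ (hident i).integrable_iff.2 hint
  have hY : ∀ i, Integrable (Y i) μ := fun i ↦ (hX i).aestronglyMeasurable.integrable_truncation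
  have hXY : ∀ i, Integrable (fun ω ↦ |X i ω - Y i ω|) μ := fun i ↦ ((hX i).sub (hY i)).abs
  have hYmean : ∀ i, μ[Y i] = μ[Y 0] := fun i ↦ (hident i).truncation.integral_eq
  have hg : Measurable fun x : ℝ ↦ |x - Set.indicator (Set.Ioc (-A) A) id x| :=
    (measurable_id.sub (measurable_id.indicator measurableSet_Ioc)).abs
  have hXYmean : ∀ i, ∫ ω, |X i ω - Y i ω| ∂μ = I := fun i ↦ ((hident i).comp hg).integral_eq
  have hbias : |μ[Y 0] - μ[X 0]| ≤ I := by
    rw [abs_sub_comm, ← integral_sub (hX 0) (hY 0)]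
    exact abs_integral_le_integral_abs
  have hfluct : ∫ ω, |∑ i ∈ range n, Y i ω - n * μ[Y 0]| ∂μ ≤ |A| * √n := by
    have h := integral_abs_sum_sub_sum_integral_le (Y := Y)
      (hindep.comp _ fun _ ↦ measurable_id.indicator measurableSet_Ioc)
      (fun i ↦ (hY i).aestronglyMeasurable) (fun i ↦ abs_truncation_le_bound (X i) A) (range n)
    rwa [sum_congr rfl fun i _ ↦ hYmean i, sum_const, card_range, nsmul_eq_mul] at h
  calc ∫ ω, |(n : ℝ)⁻¹ * ∑ i ∈ range n, X i ω - μ[X 0]| ∂μ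
      ≤ ∫ ω, ((n : ℝ)⁻¹ * ∑ i ∈ range n, |X i ω - Y i ω|
          + (n : ℝ)⁻¹ * |∑ i ∈ range n, Y i ω - n * μ[Y 0]| + |μ[Y 0] - μ[X 0]|) ∂μ :=
        integral_mono (by fun_prop) (by fun_prop) fun ω ↦ abs_inv_mul_sum_sub_le hn _ _ _ _
    _ = I + (n : ℝ)⁻¹ * ∫ ω, |∑ i ∈ range n, Y i ω - n * μ[Y 0]| ∂μ
          + |μ[Y 0] - μ[X 0]| := by
        rw [integral_add (by fun_prop) (by fun_prop), integral_add (by fun_prop) (by fun_prop),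
          integral_const_mul, integral_const_mul, integral_finsetSum _ fun i _ ↦ hXY i]
        simp [hXYmean, hn]
    _ ≤ I + (n : ℝ)⁻¹ * (|A| * √n) + I := by gcongr
    _ = 2 * I + |A| / √n := by
        rw [mul_left_comm, inv_mul_eq_div, Real.sqrt_div_self', mul_one_div]
        ring

lemma measureReal_lt_abs_inv_mul_sum_sub_le [IsProbabilityMeasure μ] {X : ℕ → Ω → ℝ}
    (hindep : iIndepFun X μ) (hident : ∀ i, IdentDistrib (X i) (X 0) μ μ)
    (hint : Integrable (X 0) μ) {ε : ℝ} (hε : 0 < ε) {n : ℕ} (hn : n ≠ 0) (A : ℝ) :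
    μ.real {ω | ε < |(n : ℝ)⁻¹ * ∑ i ∈ range n, X i ω - μ[X 0]|}
      ≤ (2 * ∫ ω, |X 0 ω - truncation (X 0) A ω| ∂μ + |A| / √n) / ε := by
  have hX : ∀ i, Integrable (X i) μ := fun i ↦ (hident i).integrable_iff.2 hint
  rw [le_div_iff₀ hε, mul_comm]
  calc ε * μ.real {ω | ε < |(n : ℝ)⁻¹ * ∑ i ∈ range n, X i ω - μ[X 0]|}
      ≤ ε * μ.real {ω | ε ≤ |(n : ℝ)⁻¹ * ∑ i ∈ range n, X i ω - μ[X 0]|} := by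
        gcongr
        · exact measure_ne_top _ _
        · exact le_of_lt
    _ ≤ ∫ ω, |(n : ℝ)⁻¹ * ∑ i ∈ range n, X i ω - μ[X 0]| ∂μ :=
        mul_meas_ge_le_integral_of_nonneg (ae_of_all _ fun _ ↦ abs_nonneg _) (by fun_prop) ε
    _ ≤ _ := integral_abs_inv_mul_sum_sub_le hindep hident hint hn A

end ProbabilityTheory

theorem wlln_triangular_array_of_ui_general
    {Ω : Type*} [MeasureSpace Ω] [IsProbabilityMeasure (ℙ : Measure Ω)]
    (X : ℕ → ℕ → Ω → ℝ)
    (hindep : ∀ n, iIndepFun (X n) ℙ)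
    (hident : ∀ n g, IdentDistrib (X n g) (X n 0) ℙ ℙ)
    (hint : ∀ n, Integrable (X n 0) ℙ)
    (μ : ℕ → ℝ) (hμ : ∀ n, μ n = ∫ ω, X n 0 ω ∂(ℙ : Measure Ω))
    (hUI : ∀ ε : ℝ, 0 < ε → ∃ lam : ℝ, 0 < lam ∧ ∀ n,
      ∫ ω in {ω | lam < |X n 0 ω|}, |X n 0 ω| ∂(ℙ : Measure Ω) ≤ ε) :
    ∀ ε : ℝ, 0 < ε →
      Tendsto (fun n : ℕ =>
          ℙ {ω | ε < |(n : ℝ)⁻¹ * ∑ g ∈ Finset.range n, X n g ω - μ n|})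
        atTop (nhds 0) := by
  intro ε hε
  rw [← ENNReal.tendsto_toReal_iff (fun _ ↦ measure_ne_top _ _) ENNReal.zero_ne_top,
    ENNReal.toReal_zero]
  refine tendsto_order.2
    ⟨fun a ha ↦ Eventually.of_forall fun _ ↦ ha.trans_le ENNReal.toReal_nonneg, fun η hη ↦ ?_⟩
  obtain ⟨lam, -, hlam⟩ := hUI (ε * η / 4) (by positivity)
  have hdecay : Tendsto (fun n : ℕ ↦ |lam + 1| / √n) atTop (𝓝 0) :=
    tendsto_const_nhds.div_atTop (Real.tendsto_sqrt_atTop.comp tendsto_natCast_atTop_atTop)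
  filter_upwards [hdecay.eventually (gt_mem_nhds (by positivity : 0 < ε * η / 2)),
    eventually_ne_atTop 0] with n hsmall hn
  have htail := (integral_abs_sub_truncation_le_setIntegral (hint n) (lt_add_one lam)).trans
    (hlam n)
  have h := measureReal_lt_abs_inv_mul_sum_sub_le (hindep n) (hident n) (hint n) hε hn (lam + 1)
  rw [← hμ n] at h
  calc (ℙ {ω | ε < |(n : ℝ)⁻¹ * ∑ g ∈ Finset.range n, X n g ω - μ n|}).toReal
      < (2 * (ε * η / 4) + ε * η / 2) / ε :=
        h.trans_lt ((div_lt_div_iff_of_pos_right hε).2 (by linarith))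
    _ = η := by field_simp; ring

/-- Uniform integrability implies a weak law of large numbers for row-wise i.i.d.
triangular arrays. -/
theorem wlln_triangular_array_of_ui
    {Ω : Type*} [MeasureSpace Ω] [IsProbabilityMeasure (ℙ : Measure Ω)]
    (X : ℕ → ℕ → Ω → ℝ) (hmeas : ∀ n g, Measurable (X n g))
    (hindep : ∀ n, iIndepFun (X n) ℙ)
    (hident : ∀ n g, IdentDistrib (X n g) (X n 0) ℙ ℙ)
    (hint : ∀ n, Integrable (X n 0) ℙ)
    (μ : ℕ → ℝ) (hμ : ∀ n, μ n = ∫ ω, X n 0 ω ∂(ℙ : Measure Ω))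
    (hUI : ∀ ε : ℝ, 0 < ε → ∃ lam : ℝ, 0 < lam ∧ ∀ n,
      ∫ ω in {ω | lam < |X n 0 ω|}, |X n 0 ω| ∂(ℙ : Measure Ω) ≤ ε) :
    ∀ ε : ℝ, 0 < ε →
      Tendsto (fun n : ℕ =>
          ℙ {ω | ε < |(n : ℝ)⁻¹ * ∑ g ∈ Finset.range n, X n g ω - μ n|})
        atTop (nhds 0) :=
  wlln_triangular_array_of_ui_general X hindep hident hint μ hμ hUI
end
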